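/- For every Δ > 0, every N₁ ∈ ℕ, and every n ∈ {1,…,N₁}: (φ_n − φ_{N₁+1}) · Σ_{k∈{1,…,N₁}, k≠n} 1/|φ_n − φ_k| ≤ (N₁ − 1) · ( 1/(exp(Δ·υ) − 1) + exp(3·Δ·υ)/(exp(3·Δ·υ) − 1) ). In particular, |(φ_{N₁+1} − φ_n)·L_n'(φ_n)| is bounded by the same right-hand side, where L_n'(φ_n) = Σ_{k≤N₁, k≠n} 1/(φ_n − φ_k). -/

import Mathlib

/-!
Since `φ_n − φ_{N₁+1} ≤ φ_n`, it suffices to bound each `φ_n / |φ_n − φ_k|`. The gap condition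
gives `λ_m − λ_j ≥ 3υ` whenever `1 ≤ j < m`, so `φ_k ≥ e^{Δυ} φ_n` for `k < n` and
`φ_k ≤ e^{−3Δυ} φ_n` for `k > n`; these turn into the bounds `1/(e^{Δυ} − 1)` and
`e^{3Δυ}/(e^{3Δυ} − 1)`. The estimate for `L_n'(φ_n)` is the triangle inequality.
-/

open Real Finset

/-- The nodes `φ_n = exp(-Δ·λ_n)`. -/
noncomputable def phi (lam : ℕ → ℝ) (Δ : ℝ) (n : ℕ) : ℝ := Real.exp (-Δ * lam n)

/-- `L_n'(φ_n) = Σ_{k ≤ N₁, k ≠ n} 1/(φ_n − φ_k)`. -/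
noncomputable def LagD (lam : ℕ → ℝ) (Δ : ℝ) (N₁ n : ℕ) : ℝ :=
  ∑ k ∈ (Finset.Icc 1 N₁).erase n, 1 / (phi lam Δ n - phi lam Δ k)

theorem div_sub_le_one_div_sub_one {x y c : ℝ} (hx : 0 < x) (hc : 1 < c) (h : x * c ≤ y) :
    x / (y - x) ≤ 1 / (c - 1) := by
  rw [div_le_div_iff₀ (by nlinarith) (by linarith)]
  linarith

theorem div_sub_le_div_sub_one {x y c : ℝ} (hx : 0 < x) (hc : 1 < c) (h : y * c ≤ x) :
    x / (x - y) ≤ c / (c - 1) := by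
  have hxy : 0 < x - y := by nlinarith
  rw [div_le_div_iff₀ hxy (by linarith)]
  linarith

theorem three_le_sq_sub_sq {a b : ℕ} (ha : 1 ≤ a) (hab : a < b) :
    (3 : ℝ) ≤ (b : ℝ) ^ 2 - (a : ℝ) ^ 2 := by
  have ha' : (1 : ℝ) ≤ a := by exact_mod_cast ha
  have hab' : (a : ℝ) + 1 ≤ b := by exact_mod_cast hab
  nlinarith

section

variable {lam : ℕ → ℝ} {υ Υ Δ : ℝ}

theorem phi_pos (n : ℕ) : 0 < phi lam Δ n := exp_pos _

theorem phi_mul_exp_le_phi (hΔ : 0 ≤ Δ) {a b : ℕ} {t : ℝ} (h : t ≤ lam b - lam a) :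
    phi lam Δ b * exp (Δ * t) ≤ phi lam Δ a := by
  rw [phi, phi, ← exp_add, exp_le_exp]
  nlinarith

variable (hυ : 0 < υ)
    (hgap : ∀ n m : ℕ, 1 ≤ n → n ≤ m →
      υ * ((m : ℝ) ^ 2 - (n : ℝ) ^ 2) ≤ lam m - lam n ∧
      lam m - lam n ≤ Υ * ((m : ℝ) ^ 2 - (n : ℝ) ^ 2))
include hυ hgap

theorem three_mul_le_sub_of_gap {a b : ℕ} (ha : 1 ≤ a) (hab : a < b) :
    3 * υ ≤ lam b - lam a := by
  have := three_le_sq_sub_sq ha hab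
  nlinarith [(hgap a b ha hab.le).1]

theorem phi_le_phi_of_gap (hΔ : 0 ≤ Δ) {a b : ℕ} (ha : 1 ≤ a) (hab : a ≤ b) :
    phi lam Δ b ≤ phi lam Δ a := by
  rcases hab.eq_or_lt with rfl | hab
  · exact le_rfl
  simpa using phi_mul_exp_le_phi (t := 0) hΔ (by linarith [three_mul_le_sub_of_gap hυ hgap ha hab])

theorem phi_div_abs_sub_le_of_gap (hΔ : 0 < Δ) {n k : ℕ} (hn : 1 ≤ n) (hk : 1 ≤ k) (hkn : k ≠ n) :
    phi lam Δ n * (1 / |phi lam Δ n - phi lam Δ k|) ≤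
      1 / (exp (Δ * υ) - 1) + exp (3 * Δ * υ) / (exp (3 * Δ * υ) - 1) := by
  have h1 : 1 < exp (Δ * υ) := one_lt_exp_iff.mpr (by positivity)
  have h3 : 1 < exp (3 * Δ * υ) := one_lt_exp_iff.mpr (by positivity)
  have hA : 0 ≤ 1 / (exp (Δ * υ) - 1) := by rw [one_div_nonneg]; linarith
  have hB : 0 ≤ exp (3 * Δ * υ) / (exp (3 * Δ * υ) - 1) := div_nonneg (exp_pos _).le (by linarith)
  rw [mul_one_div]
  rcases hkn.lt_or_gt with hlt | hgt
  · have hgap' : υ ≤ lam n - lam k := by linarith [three_mul_le_sub_of_gap hυ hgap hk hlt]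
    have hφ := phi_mul_exp_le_phi hΔ.le hgap'
    rw [abs_sub_comm, abs_of_pos (by nlinarith [phi_pos (lam := lam) (Δ := Δ) n])]
    linarith [div_sub_le_one_div_sub_one (phi_pos n) h1 hφ]
  · have hgap' := three_mul_le_sub_of_gap hυ hgap hn hgt
    have hφ := phi_mul_exp_le_phi hΔ.le hgap'
    rw [← mul_assoc, mul_comm Δ] at hφ
    rw [abs_of_pos (by nlinarith [phi_pos (lam := lam) (Δ := Δ) k])]
    linarith [div_sub_le_div_sub_one (phi_pos n) h3 hφ]

end

theorem card_erase_Icc_one {N n : ℕ} (hn1 : 1 ≤ n) (hnN : n ≤ N) :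
    (((Icc 1 N).erase n).card : ℝ) = (N : ℝ) - 1 := by
  rw [card_erase_of_mem (mem_Icc.mpr ⟨hn1, hnN⟩), Nat.card_Icc, Nat.add_sub_cancel,
    Nat.cast_sub (hn1.trans hnN), Nat.cast_one]

theorem abs_LagD_le (lam : ℕ → ℝ) (Δ : ℝ) (N₁ n : ℕ) :
    |LagD lam Δ N₁ n| ≤ ∑ k ∈ (Icc 1 N₁).erase n, 1 / |phi lam Δ n - phi lam Δ k| :=
  (abs_sum_le_sum_abs _ _).trans_eq (sum_congr rfl fun _ _ ↦ by rw [abs_div, abs_one])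

theorem stmt19_general (lam : ℕ → ℝ) (υ Υ : ℝ) (hυ : 0 < υ)
    (hgap : ∀ n m : ℕ, 1 ≤ n → n ≤ m →
      υ * ((m : ℝ) ^ 2 - (n : ℝ) ^ 2) ≤ lam m - lam n ∧
      lam m - lam n ≤ Υ * ((m : ℝ) ^ 2 - (n : ℝ) ^ 2))
    (Δ : ℝ) (hΔ : 0 < Δ) (N₁ : ℕ)
    (n : ℕ) (hn1 : 1 ≤ n) (hnN : n ≤ N₁) :
    (phi lam Δ n - phi lam Δ (N₁ + 1)) *
        (∑ k ∈ (Finset.Icc 1 N₁).erase n, 1 / |phi lam Δ n - phi lam Δ k|) ≤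
      ((N₁ : ℝ) - 1) *
        (1 / (Real.exp (Δ * υ) - 1) +
          Real.exp (3 * Δ * υ) / (Real.exp (3 * Δ * υ) - 1)) ∧
    |(phi lam Δ (N₁ + 1) - phi lam Δ n) * LagD lam Δ N₁ n| ≤
      ((N₁ : ℝ) - 1) *
        (1 / (Real.exp (Δ * υ) - 1) +
          Real.exp (3 * Δ * υ) / (Real.exp (3 * Δ * υ) - 1)) := by
  set S := ∑ k ∈ (Icc 1 N₁).erase n, 1 / |phi lam Δ n - phi lam Δ k|
  have hS : 0 ≤ S := sum_nonneg fun _ _ ↦ by positivity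
  have hd : 0 ≤ phi lam Δ n - phi lam Δ (N₁ + 1) :=
    sub_nonneg.mpr (phi_le_phi_of_gap hυ hgap hΔ.le hn1 (by omega))
  have hmain : (phi lam Δ n - phi lam Δ (N₁ + 1)) * S ≤ ((N₁ : ℝ) - 1) *
      (1 / (exp (Δ * υ) - 1) + exp (3 * Δ * υ) / (exp (3 * Δ * υ) - 1)) := by
    calc (phi lam Δ n - phi lam Δ (N₁ + 1)) * S ≤ phi lam Δ n * S :=
          mul_le_mul_of_nonneg_right (by linarith [phi_pos (lam := lam) (Δ := Δ) (N₁ + 1)]) hS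
      _ = ∑ k ∈ (Icc 1 N₁).erase n, phi lam Δ n * (1 / |phi lam Δ n - phi lam Δ k|) := mul_sum ..
      _ ≤ _ := by
        rw [← card_erase_Icc_one hn1 hnN, ← nsmul_eq_mul]
        refine sum_le_card_nsmul _ _ _ fun k hk ↦ ?_
        obtain ⟨hkn, hk⟩ := mem_erase.mp hk
        exact phi_div_abs_sub_le_of_gap hυ hgap hΔ hn1 (mem_Icc.mp hk).1 hkn
  refine ⟨hmain, le_trans ?_ hmain⟩
  rw [abs_mul, abs_sub_comm, abs_of_nonneg hd]
  exact mul_le_mul_of_nonneg_left (abs_LagD_le lam Δ N₁ n) hd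

theorem stmt19 (lam : ℕ → ℝ) (υ Υ : ℝ) (hυ : 0 < υ) (hυΥ : υ ≤ Υ)
    (hmono : ∀ n m : ℕ, 1 ≤ n → n < m → lam n < lam m)
    (hgap : ∀ n m : ℕ, 1 ≤ n → n ≤ m →
      υ * ((m : ℝ) ^ 2 - (n : ℝ) ^ 2) ≤ lam m - lam n ∧
      lam m - lam n ≤ Υ * ((m : ℝ) ^ 2 - (n : ℝ) ^ 2))
    (Δ : ℝ) (hΔ : 0 < Δ) (N₁ : ℕ) (hN₁ : 1 ≤ N₁)
    (n : ℕ) (hn1 : 1 ≤ n) (hnN : n ≤ N₁) :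
    (phi lam Δ n - phi lam Δ (N₁ + 1)) *
        (∑ k ∈ (Finset.Icc 1 N₁).erase n, 1 / |phi lam Δ n - phi lam Δ k|) ≤
      ((N₁ : ℝ) - 1) *
        (1 / (Real.exp (Δ * υ) - 1) +
          Real.exp (3 * Δ * υ) / (Real.exp (3 * Δ * υ) - 1)) ∧
    |(phi lam Δ (N₁ + 1) - phi lam Δ n) * LagD lam Δ N₁ n| ≤
      ((N₁ : ℝ) - 1) *
        (1 / (Real.exp (Δ * υ) - 1) +
          Real.exp (3 * Δ * υ) / (Real.exp (3 * Δ * υ) - 1)) :=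
  stmt19_general lam υ Υ hυ hgap Δ hΔ N₁ n hn1 hnN
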